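/- arXiv:2301.02507 — 4 statements merged into one kernel-verified Lean document; each statement's English description precedes it below -/
import Mathlib

section
/- For any vertex x of a connected graph G, the set EM(x) of edges monitored by x induces a forest (i.e., the subgraph with edge set EM(x) contains no cycle). -/
/-!
Order the vertices by their distance from `x`. A monitored edge always joins two different
distance levels, and if `uv` is monitored with `v` the farther endpoint, then `u` is the only
neighbour of `v` closer to `x`: another one would give a shortest path to `v` avoiding `uv`, and
then deleting `uv` changes no distance from `x` at all. So in the subgraph of monitored edges every
vertex has at most one neighbour that is not farther from `x`, which rules out a cycle: its vertex
farthest from `x` would have two.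
-/

open SimpleGraph

variable {V : Type*}

/-- Edge `e` is monitored by vertex `x` in `G`: some distance from `x` changes
when `e` is removed. -/
def monitors (G : SimpleGraph V) (x : V) (e : Sym2 V) : Prop :=
  ∃ y : V, G.edist x y ≠ (G.deleteEdges {e}).edist x y

/-- `M` is a distance-edge-monitoring set of `G`. -/
def IsDEMSet (G : SimpleGraph V) (M : Set V) : Prop :=
  ∀ e ∈ G.edgeSet, ∃ x ∈ M, monitors G x e

/-- The distance-edge-monitoring number of `G`. -/
noncomputable def dem (G : SimpleGraph V) : ℕ :=
  sInf {n | ∃ M : Set V, M.ncard = n ∧ IsDEMSet G M}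

open Walk

namespace SimpleGraph

variable {G : SimpleGraph V} {x y u v w : V}

lemma edist_lt_of_mem_support_of_length_eq [DecidableEq V] {p : G.Walk x v}
    (hp : (p.length : ℕ∞) = G.edist x v) (hw : w ∈ p.support) (hwv : w ≠ v) :
    G.edist x w < G.edist x v :=
  calc G.edist x w ≤ (p.takeUntil w hw).length := edist_le _
    _ < p.length := by exact_mod_cast length_takeUntil_lt_length hw hwv
    _ = G.edist x v := hp

lemma edist_deleteEdges_le_length {e : Sym2 V} (p : G.Walk x v) (he : e ∉ p.edges) :
    (G.deleteEdges {e}).edist x v ≤ p.length := by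
  simpa using edist_le (p.toDeleteEdge e he)

lemma exists_adj_edist_eq_of_edist_eq_add_one {n : ℕ} (h : G.edist x y = (n + 1 : ℕ)) :
    ∃ z, G.Adj z y ∧ G.edist x z = n := by
  obtain ⟨p, hp⟩ := exists_walk_of_edist_eq_coe h
  have hnil : ¬ p.Nil := by simp [not_nil_iff_lt_length, hp]
  have hadj := p.adj_penultimate hnil
  refine ⟨p.penultimate, hadj, le_antisymm ?_ ?_⟩
  · simpa [hp] using edist_le p.dropLast
  · have := G.edist_triangle (u := x) (v := p.penultimate) (w := y)
    rw [h, edist_eq_one_iff_adj.mpr hadj, Nat.cast_add, Nat.cast_one] at this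
    exact (ENat.add_le_add_iff_right ENat.one_ne_top).mp this

theorem edist_deleteEdges_le_of_edist_le (hle : G.edist x u ≤ G.edist x v)
    (hv : (G.deleteEdges {s(u, v)}).edist x v ≤ G.edist x v) (y : V) :
    (G.deleteEdges {s(u, v)}).edist x y ≤ G.edist x y := by
  set H := G.deleteEdges {s(u, v)}
  suffices ∀ n : ℕ, ∀ y, G.edist x y = n → H.edist x y ≤ n by
    cases h : G.edist x y using ENat.recTopCoe
    · exact le_top
    · exact this _ _ h
  intro n
  induction n with
  | zero =>
    intro y hy
    simp [edist_eq_zero_iff.mp (by exact_mod_cast hy)]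
  | succ n ih =>
    intro y hy
    obtain ⟨z, hzy, hz⟩ := exists_adj_edist_eq_of_edist_eq_add_one hy
    by_cases he : s(z, y) = s(u, v)
    · rcases Sym2.eq_iff.mp he with ⟨rfl, rfl⟩ | ⟨rfl, rfl⟩
      · exact hy ▸ hv
      · rw [hy, hz] at hle
        exact absurd (by exact_mod_cast hle) n.not_succ_le_self
    · have hzy' : H.Adj z y := deleteEdges_adj.mpr ⟨hzy, by simpa using he⟩
      calc H.edist x y ≤ H.edist x z + H.edist z y := SimpleGraph.edist_triangle
        _ ≤ n + 1 := add_le_add (ih z hz) (edist_eq_one_iff_adj.mpr hzy').le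
        _ = (n + 1 : ℕ) := by norm_cast

theorem isAcyclic_of_lower_neighbor_unique {α : Type*} [LinearOrder α] (f : V → α)
    (h : ∀ v w₁ w₂, G.Adj w₁ v → G.Adj w₂ v → f w₁ ≤ f v → f w₂ ≤ f v → w₁ = w₂) :
    G.IsAcyclic := by
  classical
  intro v c hc
  obtain ⟨m, hm, hmax⟩ := c.support.toFinset.exists_max_image f ⟨v, by simp⟩
  rw [List.mem_toFinset] at hm
  have hc' := hc.rotate hm
  have hmax' : ∀ w ∈ (c.rotate m hm).support, f w ≤ f m := fun w hw ↦
    hmax w (by simpa using hw)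
  exact hc'.snd_ne_penultimate <| h m _ _ (adj_snd hc'.not_nil).symm
    (adj_penultimate hc'.not_nil) (hmax' _ (getVert_mem_support _ _))
    (hmax' _ (getVert_mem_support _ _))

end SimpleGraph

section

variable {G : SimpleGraph V} {x u v w : V}

lemma not_monitors_of_edist_deleteEdges_le (hle : G.edist x u ≤ G.edist x v)
    (hv : (G.deleteEdges {s(u, v)}).edist x v ≤ G.edist x v) : ¬ monitors G x s(u, v) :=
  fun ⟨y, hy⟩ ↦ hy <|
    le_antisymm (edist_anti (G.deleteEdges_le _)) (edist_deleteEdges_le_of_edist_le hle hv y)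

lemma monitors.edist_ne (huv : G.Adj u v) (h : monitors G x s(u, v)) :
    G.edist x u ≠ G.edist x v := by
  classical
  intro heq
  refine not_monitors_of_edist_deleteEdges_le heq.le ?_ h
  by_cases hr : G.Reachable x v
  · obtain ⟨p, hp⟩ := hr.exists_walk_length_eq_edist
    refine (edist_deleteEdges_le_length p fun he ↦ ?_).trans hp.le
    exact (edist_lt_of_mem_support_of_length_eq hp (p.fst_mem_support_of_mem_edges he) huv.ne).ne
      heq
  · rw [edist_eq_top_of_not_reachable hr]
    exact le_top

lemma monitors.eq_of_adj_of_edist_lt (h : monitors G x s(u, v)) (hle : G.edist x u ≤ G.edist x v)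
    (hwv : G.Adj w v) (hw : G.edist x w < G.edist x v) : w = u := by
  classical
  by_contra hwu
  refine not_monitors_of_edist_deleteEdges_le hle ?_ h
  obtain ⟨p, hp⟩ := exists_walk_of_edist_ne_top (hw.trans_le le_top).ne
  have hvp : v ∉ p.support := fun hv ↦
    (edist_lt_of_mem_support_of_length_eq hp hv hwv.ne.symm).not_gt hw
  have he : s(u, v) ∉ (p.concat hwv).edges := by
    rw [edges_concat, List.concat_eq_append, List.mem_append, List.mem_singleton, Sym2.eq_iff]
    rintro (he | ⟨rfl, -⟩ | ⟨-, rfl⟩)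
    · exact hvp (p.snd_mem_support_of_mem_edges he)
    · exact hwu rfl
    · exact hwv.ne rfl
  calc (G.deleteEdges {s(u, v)}).edist x v ≤ (p.concat hwv).length :=
        edist_deleteEdges_le_length _ he
    _ = G.edist x w + 1 := by rw [length_concat, Nat.cast_add, Nat.cast_one, hp]
    _ ≤ G.edist x v := Order.add_one_le_of_lt hw

end

theorem stmt4_general (G : SimpleGraph V) (x : V) :
    (SimpleGraph.fromEdgeSet {e | e ∈ G.edgeSet ∧ monitors G x e}).IsAcyclic := by
  refine isAcyclic_of_lower_neighbor_unique (G.edist x) fun v w₁ w₂ h₁ h₂ hle₁ hle₂ ↦ ?_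
  simp only [fromEdgeSet_adj, Set.mem_ofPred_eq, SimpleGraph.mem_edgeSet] at h₁ h₂
  obtain ⟨⟨hadj₁, hmon₁⟩, -⟩ := h₁
  obtain ⟨⟨-, hmon₂⟩, -⟩ := h₂
  exact hmon₂.eq_of_adj_of_edist_lt hle₂ hadj₁ (hle₁.lt_of_ne (hmon₁.edist_ne hadj₁))

theorem stmt4 [Fintype V] (G : SimpleGraph V) (hG : G.Connected) (x : V) :
    (SimpleGraph.fromEdgeSet {e | e ∈ G.edgeSet ∧ monitors G x e}).IsAcyclic :=
  stmt4_general G x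
end

section
/- For n ≥ 7, the kipas graph K̂_n (the join of K_1 with the path P_n) satisfies dem(K̂_n) = ⌊n/2⌋. -/
/-!
The apex is adjacent to every path vertex, so any two vertices are at distance at most two
through it. Hence removing a path edge changes no distance except from its own endpoints, and a
monitoring set must contain an endpoint of each of the `⌊n/2⌋` disjoint path edges
`{2k, 2k+1}` (path vertices indexed from `0`). Conversely the odd path vertices suffice: they
cover every path edge, and a spoke to `i` is monitored by any path vertex `j` with `|i - j| ≥ 3`,
whose only common neighbour with `i` is the apex; for `n ≥ 6`, `j = 1` or `j = 5` will do.
-/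

open SimpleGraph

variable {V : Type*}

/-- The kipas graph: the join of a single apex vertex `none` with the path
`P_n` on vertices `some 0, …, some (n-1)`. -/
def kipas (n : ℕ) : SimpleGraph (Option (Fin n)) :=
  SimpleGraph.fromRel (fun a b =>
    a = none ∨ ∃ i j : Fin n, a = some i ∧ b = some j ∧ (i : ℕ) + 1 = (j : ℕ))

section Monitoring

variable {G : SimpleGraph V}

lemma monitors_of_adj {x y : V} (h : G.Adj x y) : monitors G x s(x, y) :=
  ⟨y, by rw [edist_eq_one_iff_adj.mpr h, ne_comm, Ne, edist_eq_one_iff_adj]; simp⟩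

lemma isDEMSet_univ : IsDEMSet G Set.univ := by
  intro e he
  induction e using Sym2.ind with
  | _ x y => exact ⟨x, Set.mem_univ x, monitors_of_adj he⟩

lemma dem_le_ncard {M : Set V} (hM : IsDEMSet G M) : dem G ≤ M.ncard :=
  Nat.sInf_le ⟨M, rfl, hM⟩

lemma le_dem {k : ℕ} (h : ∀ M, IsDEMSet G M → k ≤ M.ncard) : k ≤ dem G :=
  le_csInf ⟨_, Set.univ, rfl, isDEMSet_univ⟩ (by rintro _ ⟨M, rfl, hM⟩; exact h M hM)

lemma deleteEdges_adj_of_ne {a b u v : V} (h : G.Adj a b) (hu : a ≠ u) (hv : a ≠ v) :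
    (G.deleteEdges {s(u, v)}).Adj a b := by
  simp [h, hu, hv]

/-- With a universal vertex `c`, every two vertices are at distance at most two through `c`,
and these paths survive the removal of an edge avoiding `c`. -/
lemma not_monitors_of_forall_adj {c x u v : V} (hc : ∀ w, w ≠ c → G.Adj c w)
    (hu : c ≠ u) (hv : c ≠ v) (hxu : x ≠ u) (hxv : x ≠ v) : ¬ monitors G x s(u, v) := by
  rintro ⟨y, hy⟩
  apply hy
  by_cases hxy : x = y
  · simp [hxy]
  by_cases hadj : G.Adj x y
  · rw [edist_eq_one_iff_adj.mpr hadj,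
      edist_eq_one_iff_adj.mpr (deleteEdges_adj_of_ne hadj hxu hxv)]
  have hxc : x ≠ c := by rintro rfl; exact hadj (hc y (Ne.symm hxy))
  have hyc : y ≠ c := by rintro rfl; exact hadj (hc x hxy).symm
  rw [edist_eq_two_iff.mpr ⟨hxy, hadj, c, (hc x hxc).symm, (hc y hyc).symm⟩,
    edist_eq_two_iff.mpr ⟨hxy, fun h => hadj (G.deleteEdges_le _ h), c,
      (deleteEdges_adj_of_ne (hc x hxc) hu hv).symm, (deleteEdges_adj_of_ne (hc y hyc) hu hv).symm⟩]

lemma monitors_of_commonNeighbors_eq_singleton {x c v : V} (hxv : x ≠ v) (hnadj : ¬ G.Adj x v)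
    (hc : G.commonNeighbors x v = {c}) : monitors G x s(c, v) := by
  refine ⟨v, ?_⟩
  rw [edist_eq_two_iff.mpr ⟨hxv, hnadj, c, hc ▸ rfl⟩]
  intro h
  obtain ⟨-, -, z, hxz, hvz⟩ := edist_eq_two_iff.mp h.symm
  have hzc : z = c := by
    rw [← Set.mem_singleton_iff, ← hc]
    exact ⟨G.deleteEdges_le _ hxz, G.deleteEdges_le _ hvz⟩
  subst hzc
  simp [Sym2.eq_swap] at hvz

end Monitoring

section Kipas

variable {n : ℕ}

@[simp]
lemma kipas_adj_none_some (i : Fin n) : (kipas n).Adj none (some i) := by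
  simp [kipas]

@[simp]
lemma kipas_adj_some_none (i : Fin n) : (kipas n).Adj (some i) none :=
  (kipas_adj_none_some i).symm

@[simp]
lemma kipas_adj_some_some {i j : Fin n} :
    (kipas n).Adj (some i) (some j) ↔ (i : ℕ) + 1 = j ∨ (j : ℕ) + 1 = i := by
  simp only [kipas, fromRel_adj, ne_eq, Option.some.injEq, reduceCtorEq, false_or]
  constructor
  · rintro ⟨-, ⟨i', j', hi, hj, h⟩ | ⟨i', j', hj, hi, h⟩⟩ <;> simp_all
  · rintro h
    refine ⟨fun hij => by subst hij; omega, ?_⟩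
    rcases h with h | h
    · exact Or.inl ⟨i, j, rfl, rfl, h⟩
    · exact Or.inr ⟨j, i, rfl, rfl, h⟩

lemma kipas_not_monitors_of_ne {i j : Fin n} {x : Option (Fin n)} (hi : x ≠ some i)
    (hj : x ≠ some j) : ¬ monitors (kipas n) x s(some i, some j) :=
  not_monitors_of_forall_adj (c := none) (by rintro (_ | w) h <;> simp_all) (by simp) (by simp)
    hi hj

lemma kipas_monitors_spoke {i j : Fin n} (h : (i : ℕ) + 3 ≤ j ∨ (j : ℕ) + 3 ≤ i) :
    monitors (kipas n) (some j) s(none, some i) := by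
  refine monitors_of_commonNeighbors_eq_singleton (by simp [Fin.ext_iff]; omega)
    (by simp; omega) ?_
  ext (_ | k)
  · simp [mem_commonNeighbors]
  · simp only [mem_commonNeighbors, kipas_adj_some_some, Set.mem_singleton_iff, reduceCtorEq,
      iff_false]
    omega

lemma half_le_ncard_of_isDEMSet {M : Set (Option (Fin n))} (hM : IsDEMSet (kipas n) M) :
    n / 2 ≤ M.ncard := by
  have hpair : ∀ k : Fin (n / 2), ∃ x ∈ M,
      x = some ⟨2 * k, by omega⟩ ∨ x = some ⟨2 * k + 1, by omega⟩ := by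
    intro k
    obtain ⟨x, hxM, hx⟩ := hM s(some ⟨2 * k, by omega⟩, some ⟨2 * k + 1, by omega⟩)
      (kipas_adj_some_some.mpr (Or.inl rfl))
    refine ⟨x, hxM, ?_⟩
    by_contra! h
    exact kipas_not_monitors_of_ne h.1 h.2 hx
  choose f hfM hf using hpair
  have hf_half : ∀ k, (f k).elim 0 (fun i => (i : ℕ) / 2) = k := by
    intro k
    rcases hf k with h | h <;> simp only [h, Option.elim_some] <;> omega
  have hf_inj : f.Injective := fun k k' h => Fin.ext (by rw [← hf_half k, ← hf_half k', h])
  calc n / 2 = (Set.range f).ncard := by simp [Set.ncard_range_of_injective hf_inj]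
    _ ≤ M.ncard := Set.ncard_le_ncard (Set.range_subset_iff.mpr hfM)

def kipasOddVertices (n : ℕ) : Set (Option (Fin n)) :=
  Set.range fun k : Fin (n / 2) => some ⟨2 * k + 1, by omega⟩

lemma ncard_kipasOddVertices : (kipasOddVertices n).ncard = n / 2 := by
  rw [kipasOddVertices, Set.ncard_range_of_injective, Nat.card_eq_fintype_card, Fintype.card_fin]
  intro k k' h
  simp only [Option.some.injEq, Fin.mk.injEq] at h
  exact Fin.ext (by omega)

lemma some_mem_kipasOddVertices {i : Fin n} (h : (i : ℕ) % 2 = 1) :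
    some i ∈ kipasOddVertices n :=
  ⟨⟨i / 2, by omega⟩, by simp only [Option.some.injEq, Fin.ext_iff]; omega⟩

lemma isDEMSet_kipasOddVertices (hn : 6 ≤ n) : IsDEMSet (kipas n) (kipasOddVertices n) := by
  have spoke (i : Fin n) : ∃ x ∈ kipasOddVertices n, monitors (kipas n) x s(none, some i) := by
    by_cases hodd : (i : ℕ) % 2 = 1
    · exact ⟨some i, some_mem_kipasOddVertices hodd,
        Sym2.eq_swap ▸ monitors_of_adj (kipas_adj_some_none i)⟩
    by_cases hlt : (i : ℕ) < 3
    · exact ⟨some ⟨5, by omega⟩, some_mem_kipasOddVertices (by simp),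
        kipas_monitors_spoke (Or.inl (by simp only; omega))⟩
    · exact ⟨some ⟨1, by omega⟩, some_mem_kipasOddVertices (by simp),
        kipas_monitors_spoke (Or.inr (by simp only; omega))⟩
  intro e he
  induction e using Sym2.ind with
  | _ a b =>
    rw [mem_edgeSet] at he
    rcases a with _ | i <;> rcases b with _ | j
    · exact absurd he (kipas n).irrefl
    · exact spoke j
    · exact Sym2.eq_swap ▸ spoke i
    · by_cases hodd : (i : ℕ) % 2 = 1
      · exact ⟨some i, some_mem_kipasOddVertices hodd, monitors_of_adj he⟩
      · have hij := kipas_adj_some_some.mp he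
        exact ⟨some j, some_mem_kipasOddVertices (by omega),
          Sym2.eq_swap ▸ monitors_of_adj he.symm⟩

end Kipas

theorem stmt11 (n : ℕ) (hn : 7 ≤ n) : dem (kipas n) = n / 2 :=
  le_antisymm (ncard_kipasOddVertices ▸ dem_le_ncard (isDEMSet_kipasOddVertices (by omega)))
    (le_dem fun _ => half_le_ncard_of_isDEMSet)
end

section
/- Let T be a spanning tree of the complete graph K_n (n ≥ 2). Then the restricted DEM number dem(K_n|_T) equals the vertex cover number β(T) of T, and hence 1 ≤ dem(K_n|_T) ≤ ⌊n/2⌋. -/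
/-!
In the complete graph every two distinct vertices are adjacent, so removing an edge `uv` changes
only the distance between `u` and `v`. Hence a vertex monitors an edge of `K_n` exactly when it is
an endpoint of it, and a set monitoring the edges of `T` is the same as a vertex cover of `T`.
A tree is bipartite and both colour classes are vertex covers, so the smaller one has at most
`⌊n/2⌋` vertices; a tree on at least two vertices has an edge, so every cover is nonempty.
-/

open SimpleGraph

variable {V : Type*}

namespace SimpleGraph

variable {G : SimpleGraph V}

theorem monitors_of_adj {x y : V} (h : G.Adj x y) : monitors G x s(x, y) := by
  refine ⟨y, fun hxy => ?_⟩
  have hdel : ¬ (G.deleteEdges {s(x, y)}).Adj x y := by simp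
  rw [edist_eq_one_iff_adj.mpr h] at hxy
  exact hdel (edist_eq_one_iff_adj.mp hxy.symm)

theorem monitors_of_mem_edgeSet {x : V} {e : Sym2 V} (he : e ∈ G.edgeSet) (hx : x ∈ e) :
    monitors G x e := by
  obtain ⟨y, rfl⟩ := Sym2.mem_iff_exists.mp hx
  exact monitors_of_adj he

theorem not_monitors_top_of_notMem {x : V} {e : Sym2 V} (hx : x ∉ e) :
    ¬ monitors (⊤ : SimpleGraph V) x e := by
  rintro ⟨y, hy⟩
  rcases eq_or_ne x y with rfl | hxy
  · simp at hy
  · have hdel : ((⊤ : SimpleGraph V).deleteEdges {e}).Adj x y := by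
      simp only [deleteEdges_adj, top_adj, Set.mem_singleton_iff]
      exact ⟨hxy, fun h => hx (h ▸ Sym2.mem_mk_left x y)⟩
    rw [edist_eq_one_iff_adj.mpr (by simpa using hxy), edist_eq_one_iff_adj.mpr hdel] at hy
    exact hy rfl

theorem monitors_top_iff_mem {x : V} {e : Sym2 V} (he : ¬ e.IsDiag) :
    monitors (⊤ : SimpleGraph V) x e ↔ x ∈ e :=
  ⟨fun h => by_contra fun hx => not_monitors_top_of_notMem hx h,
    monitors_of_mem_edgeSet (edgeSet_top ▸ he)⟩

theorem isVertexCover_iff_forall_mem_edgeSet {c : Set V} :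
    G.IsVertexCover c ↔ ∀ e ∈ G.edgeSet, ∃ v ∈ c, v ∈ e := by
  refine ⟨fun hc e he => ?_, fun hc v w hvw => ?_⟩
  · induction e using Sym2.ind with
    | _ v w =>
      rcases hc he with hv | hw
      · exact ⟨v, hv, Sym2.mem_mk_left v w⟩
      · exact ⟨w, hw, Sym2.mem_mk_right v w⟩
  · obtain ⟨u, hu, huvw⟩ := hc s(v, w) hvw
    rcases Sym2.mem_iff.mp huvw with rfl | rfl <;> simp [hu]

theorem forall_mem_edgeSet_exists_monitors_top_iff {M : Set V} :
    (∀ e ∈ G.edgeSet, ∃ x ∈ M, monitors (⊤ : SimpleGraph V) x e) ↔ G.IsVertexCover M := by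
  rw [isVertexCover_iff_forall_mem_edgeSet]
  refine forall₂_congr fun e he => ?_
  simp only [monitors_top_iff_mem (G.not_isDiag_of_mem_edgeSet he)]

theorem IsBipartiteWith.isVertexCover {s t : Set V} (h : G.IsBipartiteWith s t) :
    G.IsVertexCover s := fun _ _ hvw => by
  rcases h.mem_of_adj hvw with ⟨hv, -⟩ | ⟨-, hw⟩
  · exact .inl hv
  · exact .inr hw

theorem IsBipartite.exists_isVertexCover_ncard_le [Finite V] (h : G.IsBipartite) :
    ∃ c : Set V, G.IsVertexCover c ∧ c.ncard ≤ Nat.card V / 2 := by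
  obtain ⟨s, t, hst⟩ := h.exists_isBipartiteWith
  have hsum : s.ncard + t.ncard ≤ Nat.card V :=
    Set.ncard_union_eq hst.disjoint ▸ Set.ncard_le_card _
  rcases le_total s.ncard t.ncard with hle | hle
  · exact ⟨s, hst.isVertexCover, by omega⟩
  · exact ⟨t, hst.symm.isVertexCover, by omega⟩

theorem Preconnected.ncard_pos_of_isVertexCover [Finite V] [Nontrivial V] (hG : G.Preconnected)
    {c : Set V} (hc : G.IsVertexCover c) : 0 < c.ncard := by
  obtain ⟨v⟩ := ‹Nontrivial V›.to_nonempty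
  obtain ⟨w, hvw⟩ : v ∈ G.support := hG.support_eq_univ ▸ Set.mem_univ v
  rw [Set.ncard_pos]
  rcases hc hvw with hv | hw
  · exact ⟨v, hv⟩
  · exact ⟨w, hw⟩

end SimpleGraph

theorem stmt15 [Fintype V] (T : SimpleGraph V) (hT : T.IsTree)
    (hn : 2 ≤ Fintype.card V) :
    sInf {n | ∃ M : Set V, M ⊆ T.support ∧ M.ncard = n ∧
        ∀ e ∈ T.edgeSet, ∃ x ∈ M, monitors (⊤ : SimpleGraph V) x e} =
      sInf {n | ∃ M : Set V, M.ncard = n ∧ ∀ e ∈ T.edgeSet, ∃ v ∈ M, v ∈ e} ∧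
    1 ≤ sInf {n | ∃ M : Set V, M ⊆ T.support ∧ M.ncard = n ∧
        ∀ e ∈ T.edgeSet, ∃ x ∈ M, monitors (⊤ : SimpleGraph V) x e} ∧
    sInf {n | ∃ M : Set V, M ⊆ T.support ∧ M.ncard = n ∧
        ∀ e ∈ T.edgeSet, ∃ x ∈ M, monitors (⊤ : SimpleGraph V) x e} ≤
      Fintype.card V / 2 := by
  have : Nontrivial V := Fintype.one_lt_card_iff_nontrivial.mp hn
  have hconn := hT.connected.preconnected
  have hdem : {n | ∃ M : Set V, M ⊆ T.support ∧ M.ncard = n ∧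
      ∀ e ∈ T.edgeSet, ∃ x ∈ M, monitors (⊤ : SimpleGraph V) x e} =
      {n | ∃ M : Set V, M.ncard = n ∧ T.IsVertexCover M} := by
    simp only [hconn.support_eq_univ, Set.subset_univ, true_and,
      forall_mem_edgeSet_exists_monitors_top_iff]
  have hcover : {n | ∃ M : Set V, M.ncard = n ∧ ∀ e ∈ T.edgeSet, ∃ v ∈ M, v ∈ e} =
      {n | ∃ M : Set V, M.ncard = n ∧ T.IsVertexCover M} := by
    simp only [isVertexCover_iff_forall_mem_edgeSet]
  rw [hdem, hcover]
  obtain ⟨c, hc, hcard⟩ := hT.isBipartite.exists_isVertexCover_ncard_le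
  have hcS : c.ncard ∈ {n | ∃ M : Set V, M.ncard = n ∧ T.IsVertexCover M} := ⟨c, rfl, hc⟩
  refine ⟨rfl, le_csInf ⟨_, hcS⟩ ?_, (Nat.sInf_le hcS).trans ?_⟩
  · rintro _ ⟨M, rfl, hM⟩
    exact hconn.ncard_pos_of_isVertexCover hM
  · simpa [Nat.card_eq_fintype_card] using hcard
end

section
/- If H is a connected induced subgraph of a connected graph G, then dem(G) - dem(G|_H) ≤ |V(G)| - |V(H)|. -/
open SimpleGraph

variable {V : Type*}

/-! Take a minimum set `M ⊆ V(H)` monitoring the edges of `H`. Every edge of `G` that is not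
an edge of `H` has an endpoint outside `V(H)`, and an endpoint of an edge always monitors it
(removing the edge raises the distance between its ends from `1`). Hence `M ∪ (V(G) ∖ V(H))`
is a DEM set of `G`, of size at most `dem(G|_H) + |V(G)| - |V(H)|`. -/

lemma monitors_of_adj_s16 (G : SimpleGraph V) {a b : V} (hab : G.Adj a b) :
    monitors G a s(a, b) := by
  refine ⟨b, fun h => ?_⟩
  rw [edist_eq_one_iff_adj.mpr hab] at h
  simpa using edist_eq_one_iff_adj.mp h.symm

lemma monitors_of_mem_edgeSet (G : SimpleGraph V) {x : V} {e : Sym2 V} (he : e ∈ G.edgeSet)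
    (hx : x ∈ e) : monitors G x e := by
  induction e with
  | _ a b =>
    rcases Sym2.mem_iff.mp hx with rfl | rfl
    · exact monitors_of_adj_s16 G he
    · rw [Sym2.eq_swap]
      exact monitors_of_adj_s16 G he.symm

lemma isDEMSet_union_compl (G : SimpleGraph V) {s M : Set V}
    (hM : ∀ e ∈ G.edgeSet, (∀ v ∈ e, v ∈ s) → ∃ x ∈ M, monitors G x e) :
    IsDEMSet G (M ∪ sᶜ) := by
  intro e he
  by_cases hes : ∀ v ∈ e, v ∈ s
  · obtain ⟨x, hxM, hx⟩ := hM e he hes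
    exact ⟨x, Or.inl hxM, hx⟩
  · push Not at hes
    obtain ⟨v, hve, hvs⟩ := hes
    exact ⟨v, Or.inr hvs, monitors_of_mem_edgeSet G he hve⟩

theorem stmt16_general [Fintype V] (G : SimpleGraph V) (s : Set V) :
    dem G - sInf {n | ∃ M : Set V, M ⊆ s ∧ M.ncard = n ∧
        ∀ e ∈ G.edgeSet, (∀ v ∈ e, v ∈ s) → ∃ x ∈ M, monitors G x e} ≤
      Fintype.card V - s.ncard := by
  set A : Set ℕ := {n | ∃ M : Set V, M ⊆ s ∧ M.ncard = n ∧
      ∀ e ∈ G.edgeSet, (∀ v ∈ e, v ∈ s) → ∃ x ∈ M, monitors G x e}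
  have hA : A.Nonempty := ⟨s.ncard, s, subset_rfl, rfl, fun e he hes =>
    ⟨_, hes _ e.out_fst_mem, monitors_of_mem_edgeSet G he e.out_fst_mem⟩⟩
  obtain ⟨M, -, hM_card, hM⟩ := Nat.sInf_mem hA
  have hdem : dem G ≤ sInf A + sᶜ.ncard :=
    calc dem G ≤ (M ∪ sᶜ).ncard := Nat.sInf_le ⟨_, rfl, isDEMSet_union_compl G hM⟩
      _ ≤ M.ncard + sᶜ.ncard := Set.ncard_union_le _ _
      _ = sInf A + sᶜ.ncard := by rw [hM_card]
  rw [Set.ncard_compl, Nat.card_eq_fintype_card] at hdem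
  omega

theorem stmt16 [Fintype V] (G : SimpleGraph V) (hG : G.Connected) (s : Set V)
    (hs : (SimpleGraph.induce s G).Connected) :
    dem G - sInf {n | ∃ M : Set V, M ⊆ s ∧ M.ncard = n ∧
        ∀ e ∈ G.edgeSet, (∀ v ∈ e, v ∈ s) → ∃ x ∈ M, monitors G x e} ≤
      Fintype.card V - s.ncard :=
  stmt16_general G s
end
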